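/- Let Γ be a finite group and C = ⊕_{γ∈Γ} C_γ a Γ-graded weakly fusion category such that the identity component C_1 is rigid. Then C is rigid, hence a fusion category. -/

import Mathlib

/-!
Every object is a finite direct sum of simple objects (monomorphisms split, and the dimension of
`End X` drops on each summand), and exact pairings add over biproducts, so it suffices to treat a
simple `X ∈ C_γ`. Its weak codual lies in `C_{γ⁻¹}`, so `X ⊗ codual X ∈ C_1` has a left dual `G`.
Since `𝟙` is simple, the nonzero canonical map `𝟙 ⟶ codual X ⊗ X` is a split monomorphism, and a
left dual of `X` is then the image of an idempotent on `codual X ⊗ G`. Right duals come from the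
same argument in the monoidal opposite, applied to `dual X`, which is simple because
`End (dual X) ≅ Hom (𝟙, X ⊗ dual X) ≅ End X`.
-/

open CategoryTheory MonoidalCategory

/-- The structure of a monoidal r-category on a monoidal category `C`: for each object `X`
the functor `Y ↦ Hom(𝟙_C, X ⊗ Y)` is representable by an object `dual X`, and the duality
`X ↦ dual X` is an equivalence with inverse `codual`, giving functorial identifications
`Hom(𝟙_C, X ⊗ Y) ≃ Hom(dual X, Y) ≃ Hom(codual Y, X)`. -/
structure RStruct (C : Type*) [Category C] [MonoidalCategory C] where
  dual : C → C
  codual : C → C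
  homEquiv : ∀ X Y : C, (𝟙_ C ⟶ X ⊗ Y) ≃ (dual X ⟶ Y)
  homEquiv_natural : ∀ {X Y Z : C} (g : 𝟙_ C ⟶ X ⊗ Y) (f : Y ⟶ Z),
    homEquiv X Z (g ≫ X ◁ f) = homEquiv X Y g ≫ f
  homEquiv' : ∀ X Y : C, (𝟙_ C ⟶ X ⊗ Y) ≃ (codual Y ⟶ X)
  homEquiv'_natural : ∀ {X Z : C} (Y : C) (g : 𝟙_ C ⟶ X ⊗ Y) (f : X ⟶ Z),
    homEquiv' Z Y (g ≫ f ▷ Y) = homEquiv' X Y g ≫ f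
  codual_dual : ∀ X : C, codual (dual X) = X
  dual_codual : ∀ X : C, dual (codual X) = X

/-- The canonical coevaluation morphism `coev_X : 𝟙_C ⟶ X ⊗ X*` of an object in a monoidal
r-category. -/
def RStruct.coev {C : Type*} [Category C] [MonoidalCategory C]
    (r : RStruct C) (X : C) : 𝟙_ C ⟶ X ⊗ r.dual X :=
  (r.homEquiv X (r.dual X)).symm (𝟙 (r.dual X))

section Pairings

variable {C : Type*} [Category C] [MonoidalCategory C]

theorem whiskerLeft_comp_evaluation_of_coevaluation_evaluation {X D : C}
    {η : 𝟙_ C ⟶ D ⊗ X} {ε : X ⊗ D ⟶ 𝟙_ C}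
    (hzz : X ◁ η ≫ (α_ X D X).inv ≫ ε ▷ X = (ρ_ X).hom ≫ (λ_ X).inv) :
    X ◁ ((λ_ D).inv ≫ η ▷ D ≫ (α_ D X D).hom ≫ D ◁ ε ≫ (ρ_ D).hom) ≫ ε = ε := by
  calc _ = 𝟙 _ ⊗≫ X ◁ (η ▷ D) ⊗≫ ((X ⊗ D) ◁ ε ≫ ε ▷ 𝟙_ C) ⊗≫ 𝟙 _ := by monoidal
    _ = 𝟙 _ ⊗≫ X ◁ (η ▷ D) ⊗≫ (ε ▷ (X ⊗ D) ≫ 𝟙_ C ◁ ε) ⊗≫ 𝟙 _ := by rw [whisker_exchange]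
    _ = 𝟙 _ ⊗≫ ((X ◁ η ≫ (α_ X D X).inv ≫ ε ▷ X) ▷ D) ⊗≫ ε ⊗≫ 𝟙 _ := by monoidal
    _ = ε := by rw [hzz]; monoidal

/-- The other zigzag composite is an idempotent on `D`; its image is the left dual. -/
theorem exists_left_dual_of_coevaluation_evaluation [IsIdempotentComplete C] {X D : C}
    (η : 𝟙_ C ⟶ D ⊗ X) (ε : X ⊗ D ⟶ 𝟙_ C)
    (hzz : X ◁ η ≫ (α_ X D X).inv ≫ ε ▷ X = (ρ_ X).hom ≫ (λ_ X).inv) :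
    ∃ Y : C, Nonempty (ExactPairing Y X) := by
  set v : D ⟶ D := (λ_ D).inv ≫ η ▷ D ≫ (α_ D X D).hom ≫ D ◁ ε ≫ (ρ_ D).hom with hv
  have hvε : X ◁ v ≫ ε = ε := whiskerLeft_comp_evaluation_of_coevaluation_evaluation hzz
  have hvv : v ≫ v = v := by
    calc v ≫ v = 𝟙 _ ⊗≫ (𝟙_ C ◁ v ≫ η ▷ D) ⊗≫ D ◁ ε ⊗≫ 𝟙 _ := by rw [hv]; monoidal
      _ = 𝟙 _ ⊗≫ (η ▷ D ≫ (D ⊗ X) ◁ v) ⊗≫ D ◁ ε ⊗≫ 𝟙 _ := by rw [← whisker_exchange]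
      _ = 𝟙 _ ⊗≫ η ▷ D ⊗≫ D ◁ (X ◁ v ≫ ε) ⊗≫ 𝟙 _ := by monoidal
      _ = v := by rw [hvε, hv]; monoidal
  obtain ⟨Y, i, e, hie, hei⟩ := IsIdempotentComplete.idempotents_split D v hvv
  refine ⟨Y, ⟨{ coevaluation' := η ≫ e ▷ X
                evaluation' := X ◁ i ≫ ε
                coevaluation_evaluation' := ?_
                evaluation_coevaluation' := ?_ }⟩⟩
  · calc _ = X ◁ η ≫ (α_ X D X).inv ≫ (X ◁ (e ≫ i) ≫ ε) ▷ X := by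
          simp only [MonoidalCategory.whiskerLeft_comp, comp_whiskerRight, Category.assoc]
          rw [associator_inv_naturality_middle_assoc]
      _ = (ρ_ X).hom ≫ (λ_ X).inv := by rw [hei, hvε, hzz]
  · calc _ = 𝟙 _ ⊗≫ ((η ≫ e ▷ X) ▷ Y ≫ (Y ⊗ X) ◁ i) ⊗≫ Y ◁ ε ⊗≫ 𝟙 _ := by monoidal
      _ = 𝟙 _ ⊗≫ 𝟙_ C ◁ i ⊗≫ η ▷ D ⊗≫ (e ▷ (X ⊗ D) ≫ Y ◁ ε) ⊗≫ 𝟙 _ := by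
          rw [← whisker_exchange]; monoidal
      _ = 𝟙 _ ⊗≫ 𝟙_ C ◁ i ⊗≫ η ▷ D ⊗≫ (D ◁ ε ≫ e ▷ 𝟙_ C) ⊗≫ 𝟙 _ := by
          rw [← whisker_exchange]
      _ = (λ_ Y).hom ≫ (i ≫ v ≫ e) ≫ (ρ_ Y).inv := by rw [hv]; monoidal
      _ = (λ_ Y).hom ≫ (ρ_ Y).inv := by
          simp only [← hei, Category.assoc, reassoc_of% hie, hie, Category.id_comp]

/-- The left dual of `X` is cut out of `B ⊗ G`: the coevaluation threads `c` through the
coevaluation of `G` and closes the strand with the retraction of `c`. -/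
theorem exists_left_dual_of_isSplitMono_unit [IsIdempotentComplete C] {X B G : C}
    [ExactPairing G (X ⊗ B)] (c : 𝟙_ C ⟶ B ⊗ X) [IsSplitMono c] :
    ∃ Y : C, Nonempty (ExactPairing Y X) := by
  let p := retraction c
  let h : X ⟶ G ⊗ X := (λ_ X).inv ≫ η_ G (X ⊗ B) ▷ X ≫ (α_ G (X ⊗ B) X).hom ≫
    G ◁ ((α_ X B X).hom ≫ X ◁ p ≫ (ρ_ X).hom)
  refine exists_left_dual_of_coevaluation_evaluation (D := B ⊗ G) (c ≫ B ◁ h ≫ (α_ B G X).inv)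
    ((α_ X B G).inv ≫ ε_ G (X ⊗ B)) ?_
  calc _ = 𝟙 _ ⊗≫ X ◁ c ⊗≫ (X ⊗ B) ◁ (η_ G (X ⊗ B) ▷ X) ⊗≫
          (((X ⊗ B) ⊗ G) ◁ ((α_ X B X).hom ≫ X ◁ p ≫ (ρ_ X).hom)
            ≫ ε_ G (X ⊗ B) ▷ X) ⊗≫ 𝟙 _ := by
        dsimp only [h]; monoidal
    _ = 𝟙 _ ⊗≫ X ◁ c ⊗≫ (X ⊗ B) ◁ (η_ G (X ⊗ B) ▷ X) ⊗≫
          (ε_ G (X ⊗ B) ▷ ((X ⊗ B) ⊗ X)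
            ≫ 𝟙_ C ◁ ((α_ X B X).hom ≫ X ◁ p ≫ (ρ_ X).hom)) ⊗≫ 𝟙 _ := by
        rw [← whisker_exchange]
    _ = 𝟙 _ ⊗≫ X ◁ c ⊗≫
          (((X ⊗ B) ◁ η_ G (X ⊗ B) ≫ (α_ (X ⊗ B) G (X ⊗ B)).inv
              ≫ ε_ G (X ⊗ B) ▷ (X ⊗ B)) ▷ X) ⊗≫ X ◁ p ⊗≫ 𝟙 _ := by
        monoidal
    _ = 𝟙 _ ⊗≫ X ◁ (c ≫ p) ⊗≫ 𝟙 _ := by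
        rw [ExactPairing.coevaluation_evaluation]; monoidal
    _ = (ρ_ X).hom ≫ (λ_ X).inv := by rw [IsSplitMono.id]; monoidal

open MonoidalOpposite in
abbrev ExactPairing.mop (X Y : C) [ExactPairing X Y] : ExactPairing (mop Y) (mop X) where
  coevaluation' := (η_ X Y).mop
  evaluation' := (ε_ X Y).mop
  coevaluation_evaluation' :=
    Quiver.Hom.unmop_inj (by simp [ExactPairing.evaluation_coevaluation])
  evaluation_coevaluation' :=
    Quiver.Hom.unmop_inj (by simp [ExactPairing.coevaluation_evaluation])

open MonoidalOpposite in
abbrev ExactPairing.unmop (X Y : Cᴹᵒᵖ) [ExactPairing X Y] :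
    ExactPairing (unmop Y) (unmop X) where
  coevaluation' := (η_ X Y).unmop
  evaluation' := (ε_ X Y).unmop
  coevaluation_evaluation' :=
    Quiver.Hom.mop_inj (by simp [ExactPairing.evaluation_coevaluation])
  evaluation_coevaluation' :=
    Quiver.Hom.mop_inj (by simp [ExactPairing.coevaluation_evaluation])

open MonoidalOpposite in
theorem exists_right_dual_of_isSplitMono_unit [IsIdempotentComplete C] {X N G : C}
    [ExactPairing (N ⊗ X) G] (c : 𝟙_ C ⟶ X ⊗ N) [IsSplitMono c] :
    ∃ Y : C, Nonempty (ExactPairing X Y) := by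
  have := Idempotents.isIdempotentComplete_iff_of_equivalence (mopEquiv C) |>.1 inferInstance
  have := ExactPairing.mop (N ⊗ X) G
  have : IsSplitMono c.mop := inferInstanceAs (IsSplitMono ((mopFunctor C).map c))
  obtain ⟨Y, ⟨_⟩⟩ :=
    exists_left_dual_of_isSplitMono_unit (X := mop X) (B := mop N) (G := mop G) c.mop
  exact ⟨unmop Y, ⟨ExactPairing.unmop Y (mop X)⟩⟩

end Pairings

section Biproducts

open Limits

variable {C : Type*} [Category C] [MonoidalCategory C]

theorem whiskerLeft_coevaluation_comp_evaluation_whiskerRight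
    {X₁ Y₁ X₂ Y₂ X Y : C} [ExactPairing X₁ Y₁] [ExactPairing X₂ Y₂]
    (a : X₁ ⟶ X) (b : Y₁ ⟶ Y) (f : Y ⟶ Y₂) (u : X ⟶ X₂) :
    Y ◁ (η_ X₁ Y₁ ≫ (a ⊗ₘ b)) ≫ (α_ Y X Y).inv ≫ ((f ⊗ₘ u) ≫ ε_ X₂ Y₂) ▷ Y =
      f ▷ 𝟙_ C ≫ (Y₂ ◁ (η_ X₁ Y₁ ≫ (a ≫ u) ▷ Y₁) ≫ (α_ Y₂ X₂ Y₁).inv ≫ ε_ X₂ Y₂ ▷ Y₁) ≫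
        𝟙_ C ◁ b := by
  calc _ = 𝟙 _ ⊗≫ Y ◁ (η_ X₁ Y₁ ≫ a ▷ Y₁) ⊗≫
          ((Y ⊗ X) ◁ b ≫ (f ▷ X ≫ Y₂ ◁ u ≫ ε_ X₂ Y₂) ▷ Y) ⊗≫ 𝟙 _ := by
        rw [tensorHom_def a b, tensorHom_def f u]; monoidal
    _ = 𝟙 _ ⊗≫ Y ◁ (η_ X₁ Y₁ ≫ a ▷ Y₁) ⊗≫
          ((f ▷ X ≫ Y₂ ◁ u ≫ ε_ X₂ Y₂) ▷ Y₁ ≫ 𝟙_ C ◁ b) ⊗≫ 𝟙 _ := by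
        rw [whisker_exchange]
    _ = 𝟙 _ ⊗≫ (Y ◁ (η_ X₁ Y₁ ≫ a ▷ Y₁) ≫ f ▷ (X ⊗ Y₁)) ⊗≫
          ((Y₂ ◁ u ≫ ε_ X₂ Y₂) ▷ Y₁ ≫ 𝟙_ C ◁ b) ⊗≫ 𝟙 _ := by
        monoidal
    _ = 𝟙 _ ⊗≫ (f ▷ 𝟙_ C ≫ Y₂ ◁ (η_ X₁ Y₁ ≫ a ▷ Y₁)) ⊗≫
          ((Y₂ ◁ u ≫ ε_ X₂ Y₂) ▷ Y₁ ≫ 𝟙_ C ◁ b) ⊗≫ 𝟙 _ := by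
        rw [whisker_exchange]
    _ = 𝟙 _ ⊗≫ f ▷ 𝟙_ C ⊗≫ Y₂ ◁ (η_ X₁ Y₁ ≫ (a ▷ Y₁ ≫ u ▷ Y₁)) ⊗≫
          ε_ X₂ Y₂ ▷ Y₁ ⊗≫ 𝟙_ C ◁ b ⊗≫ 𝟙 _ := by
        monoidal
    _ = _ := by rw [← comp_whiskerRight]; monoidal

theorem coevaluation_whiskerRight_comp_whiskerLeft_evaluation
    {X₁ Y₁ X₂ Y₂ X Y : C} [ExactPairing X₁ Y₁] [ExactPairing X₂ Y₂]
    (a : X₁ ⟶ X) (b : Y₁ ⟶ Y) (f : Y ⟶ Y₂) (u : X ⟶ X₂) :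
    (η_ X₁ Y₁ ≫ (a ⊗ₘ b)) ▷ X ≫ (α_ X Y X).hom ≫ X ◁ ((f ⊗ₘ u) ≫ ε_ X₂ Y₂) =
      𝟙_ C ◁ u ≫ ((η_ X₁ Y₁ ≫ X₁ ◁ (b ≫ f)) ▷ X₂ ≫ (α_ X₁ Y₂ X₂).hom ≫ X₁ ◁ ε_ X₂ Y₂) ≫
        a ▷ 𝟙_ C := by
  calc _ = 𝟙 _ ⊗≫ (η_ X₁ Y₁ ≫ X₁ ◁ b) ▷ X ⊗≫
          (a ▷ (Y ⊗ X) ≫ X ◁ (Y ◁ u ≫ f ▷ X₂ ≫ ε_ X₂ Y₂)) ⊗≫ 𝟙 _ := by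
        rw [tensorHom_def' a b, tensorHom_def' f u]; monoidal
    _ = 𝟙 _ ⊗≫ ((η_ X₁ Y₁ ≫ X₁ ◁ b) ▷ X ≫ (X₁ ⊗ Y) ◁ u) ⊗≫
          (X₁ ◁ (f ▷ X₂ ≫ ε_ X₂ Y₂) ≫ a ▷ 𝟙_ C) ⊗≫ 𝟙 _ := by
        rw [← whisker_exchange]; monoidal
    _ = 𝟙 _ ⊗≫ 𝟙_ C ◁ u ⊗≫ (η_ X₁ Y₁ ≫ (X₁ ◁ b ≫ X₁ ◁ f)) ▷ X₂ ⊗≫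
          X₁ ◁ ε_ X₂ Y₂ ⊗≫ a ▷ 𝟙_ C ⊗≫ 𝟙 _ := by
        rw [← whisker_exchange]; monoidal
    _ = _ := by rw [← MonoidalCategory.whiskerLeft_comp]; monoidal

variable [Preadditive C] [MonoidalPreadditive C] [HasBinaryBiproducts C]

noncomputable abbrev ExactPairing.biprod (X₁ Y₁ X₂ Y₂ : C) [ExactPairing X₁ Y₁]
    [ExactPairing X₂ Y₂] : ExactPairing (X₁ ⊞ X₂) (Y₁ ⊞ Y₂) where
  coevaluation' := η_ X₁ Y₁ ≫ (biprod.inl ⊗ₘ biprod.inl) + η_ X₂ Y₂ ≫ (biprod.inr ⊗ₘ biprod.inr)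
  evaluation' := (biprod.fst ⊗ₘ biprod.fst) ≫ ε_ X₁ Y₁ + (biprod.snd ⊗ₘ biprod.snd) ≫ ε_ X₂ Y₂
  coevaluation_evaluation' := by
    simp only [MonoidalPreadditive.whiskerLeft_add, MonoidalPreadditive.add_whiskerRight,
      Preadditive.add_comp, Preadditive.comp_add,
      whiskerLeft_coevaluation_comp_evaluation_whiskerRight, biprod.inl_fst, biprod.inl_snd,
      biprod.inr_fst, biprod.inr_snd, MonoidalPreadditive.zero_whiskerRight, comp_zero,
      zero_comp, MonoidalPreadditive.whiskerLeft_zero, add_zero, zero_add, id_whiskerRight,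
      Category.comp_id, ExactPairing.coevaluation_evaluation]
    rw [← cancel_epi (ρ_ _).inv, ← cancel_mono (λ_ _).hom]
    simp [biprod.total]
  evaluation_coevaluation' := by
    simp only [MonoidalPreadditive.whiskerLeft_add, MonoidalPreadditive.add_whiskerRight,
      Preadditive.add_comp, Preadditive.comp_add,
      coevaluation_whiskerRight_comp_whiskerLeft_evaluation, biprod.inl_fst, biprod.inl_snd,
      biprod.inr_fst, biprod.inr_snd, MonoidalPreadditive.whiskerLeft_zero, comp_zero,
      zero_comp, MonoidalPreadditive.zero_whiskerRight, add_zero, zero_add,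
      MonoidalCategory.whiskerLeft_id, Category.comp_id, ExactPairing.evaluation_coevaluation]
    rw [← cancel_epi (λ_ _).inv, ← cancel_mono (ρ_ _).hom]
    simp [biprod.total]

end Biproducts

section RigidObjects

open Limits

variable {C : Type*} [Category C] [MonoidalCategory C]

def IsRigidObject (X : C) : Prop :=
  (∃ Y : C, Nonempty (ExactPairing X Y)) ∧ (∃ Y : C, Nonempty (ExactPairing Y X))

abbrev exactPairingOfIsZero [HasZeroMorphisms C] {X : C} (hX : IsZero X) :
    ExactPairing X X where
  coevaluation' := 0
  evaluation' := 0
  coevaluation_evaluation' := (hX.of_iso (ρ_ X)).eq_of_src _ _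
  evaluation_coevaluation' := (hX.of_iso (λ_ X)).eq_of_src _ _

theorem isRigidObject_of_isZero [HasZeroMorphisms C] {X : C} (hX : IsZero X) :
    IsRigidObject X :=
  ⟨⟨X, ⟨exactPairingOfIsZero hX⟩⟩, ⟨X, ⟨exactPairingOfIsZero hX⟩⟩⟩

theorem IsRigidObject.of_iso_biprod [Preadditive C] [MonoidalPreadditive C]
    [HasBinaryBiproducts C] {X W Z : C} (e : X ≅ W ⊞ Z)
    (hW : IsRigidObject W) (hZ : IsRigidObject Z) : IsRigidObject X := by
  obtain ⟨⟨W', ⟨_⟩⟩, ⟨W'', ⟨_⟩⟩⟩ := hW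
  obtain ⟨⟨Z', ⟨_⟩⟩, ⟨Z'', ⟨_⟩⟩⟩ := hZ
  have := ExactPairing.biprod W W' Z Z'
  have := ExactPairing.biprod W'' W Z'' Z
  exact ⟨⟨W' ⊞ Z', ⟨exactPairingCongrLeft e⟩⟩, ⟨W'' ⊞ Z'', ⟨exactPairingCongrRight e⟩⟩⟩

end RigidObjects

section Semisimple

open Limits Module

variable (k : Type*) [Field k] {C : Type*} [Category C]

theorem simple_of_finrank_end_eq_one [Preadditive C] [Linear k C] [SplitMonoCategory C]
    {X : C} (h : finrank k (X ⟶ X) = 1) : Simple X := by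
  have : Nontrivial (End X) := nontrivial_of_finrank_eq_succ h
  have hid : 𝟙 X ≠ 0 := one_ne_zero (α := End X)
  have hscalar := (finrank_eq_one_iff_of_nonzero' (𝟙 X) hid).1 h
  refine ⟨fun {Y} f _ => ⟨fun _ hf => hid ((cancel_epi f).1 (by simp [hf])), fun hf => ?_⟩⟩
  have := SplitMonoCategory.isSplitMono_of_mono f
  obtain ⟨a, ha⟩ := hscalar (retraction f ≫ f)
  have : a • f = (1 : k) • f := by
    calc a • f = f ≫ (a • 𝟙 X) := by rw [Linear.comp_smul, Category.comp_id]
      _ = (1 : k) • f := by rw [ha, IsSplitMono.id_assoc, one_smul]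
  rw [smul_left_injective k hf this, one_smul] at ha
  exact ⟨⟨retraction f, IsSplitMono.id f, ha.symm⟩⟩

theorem finrank_end_pos [Preadditive C] [Linear k C] {X : C} [FiniteDimensional k (X ⟶ X)]
    (hX : ¬IsZero X) : 0 < finrank k (X ⟶ X) :=
  have := nontrivial_of_ne (𝟙 X) 0 (mt (IsZero.iff_id_eq_zero X).2 hX)
  finrank_pos

theorem finrank_end_add_le [Preadditive C] [Linear k C] [HasBinaryBiproducts C]
    {X W Z : C} (e : X ≅ W ⊞ Z) [FiniteDimensional k (X ⟶ X)] :
    finrank k (W ⟶ W) + finrank k (Z ⟶ Z) ≤ finrank k (X ⟶ X) := by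
  let L : (W ⟶ W) × (Z ⟶ Z) →ₗ[k] (X ⟶ X) :=
    { toFun := fun p =>
        e.hom ≫ (biprod.fst ≫ p.1 ≫ biprod.inl + biprod.snd ≫ p.2 ≫ biprod.inr) ≫ e.inv
      map_add' := fun p q => by
        simp only [Prod.fst_add, Prod.snd_add, Preadditive.add_comp, Preadditive.comp_add]
        abel
      map_smul' := fun a p => by simp }
  have hL : Function.Injective L := by
    intro p q hpq
    have h1 := congrArg (fun φ => biprod.inl ≫ e.inv ≫ φ ≫ e.hom ≫ biprod.fst) hpq
    have h2 := congrArg (fun φ => biprod.inr ≫ e.inv ≫ φ ≫ e.hom ≫ biprod.snd) hpq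
    simp only [L, LinearMap.coe_mk, AddHom.coe_mk, Preadditive.add_comp, Preadditive.comp_add,
      Category.assoc, Iso.inv_hom_id_assoc, Category.comp_id, biprod.inl_fst, biprod.inr_fst,
      biprod.inl_snd, biprod.inr_snd, biprod.inl_fst_assoc, biprod.inr_snd_assoc, comp_zero,
      add_zero, zero_add] at h1 h2
    exact Prod.ext h1 h2
  have := Module.Finite.of_injective L hL
  have := Module.Finite.of_surjective (LinearMap.fst k (W ⟶ W) (Z ⟶ Z)) LinearMap.fst_surjective
  have := Module.Finite.of_surjective (LinearMap.snd k (W ⟶ W) (Z ⟶ Z)) LinearMap.snd_surjective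
  simpa only [finrank_prod] using LinearMap.finrank_le_finrank_of_injective hL

theorem exists_iso_biprod_of_not_simple [Abelian C] [SplitMonoCategory C] {X : C}
    (hX : ¬IsZero X) (hXs : ¬Simple X) :
    ∃ W Z : C, ¬IsZero W ∧ ¬IsZero Z ∧ Nonempty (X ≅ W ⊞ Z) := by
  obtain ⟨W, f, _, hf⟩ : ∃ (W : C) (f : W ⟶ X), Mono f ∧ ¬(IsIso f ↔ f ≠ 0) := by
    by_contra! h
    exact hXs ⟨fun f _ => h _ f ‹_›⟩
  have hf0 : f ≠ 0 := by
    intro h0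
    have : IsIso f := by tauto
    exact hX (IsZero.of_epi_eq_zero f h0)
  have hfi : ¬IsIso f := by tauto
  have := SplitMonoCategory.isSplitMono_of_mono f
  let r : X ⟶ W := retraction f
  let split := ShortComplex.Splitting.ofExactOfRetraction (ShortComplex.cokernelSequence f)
    (ShortComplex.cokernelSequence_exact f) r (IsSplitMono.id f) inferInstance
  refine ⟨W, cokernel f, fun hW => hf0 (hW.eq_of_src _ _), fun hK => hfi ?_,
    ⟨split.isoBinaryBiproduct⟩⟩
  have := Preadditive.epi_of_isZero_cokernel f hK
  exact isIso_of_mono_of_epi f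

theorem induction_on_simple_summands [Abelian C] [Linear k C] [SplitMonoCategory C]
    (hfd : ∀ X : C, FiniteDimensional k (X ⟶ X)) {Q : C → Prop}
    (zero : ∀ X, IsZero X → Q X) (simple : ∀ X, Simple X → Q X)
    (biprod : ∀ {X W Z : C}, (X ≅ W ⊞ Z) → Q W → Q Z → Q X) (X : C) : Q X := by
  induction h : finrank k (X ⟶ X) using Nat.strong_induction_on generalizing X with
  | _ n ih =>
    by_cases hX : IsZero X
    · exact zero X hX
    by_cases hXs : Simple X
    · exact simple X hXs
    obtain ⟨W, Z, hW, hZ, ⟨e⟩⟩ := exists_iso_biprod_of_not_simple hX hXs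
    have hWZ := finrank_end_add_le k e
    have hW1 := finrank_end_pos k hW
    have hZ1 := finrank_end_pos k hZ
    exact biprod e (ih _ (by omega) W rfl) (ih _ (by omega) Z rfl)

end Semisimple

section RStruct

open Module

variable {C : Type*} [Category C] [MonoidalCategory C] (r : RStruct C)

theorem RStruct.homEquiv_symm_apply {X Z : C} (f : r.dual X ⟶ Z) :
    (r.homEquiv X Z).symm f = r.coev X ≫ X ◁ f := by
  rw [Equiv.symm_apply_eq, r.homEquiv_natural, RStruct.coev, Equiv.apply_symm_apply,
    Category.id_comp]

noncomputable def RStruct.coev' (X : C) : 𝟙_ C ⟶ r.codual X ⊗ X :=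
  (r.homEquiv' (r.codual X) X).symm (𝟙 (r.codual X))

theorem RStruct.homEquiv'_symm_apply {X Z : C} (f : r.codual X ⟶ Z) :
    (r.homEquiv' Z X).symm f = r.coev' X ≫ f ▷ X := by
  rw [Equiv.symm_apply_eq, r.homEquiv'_natural, RStruct.coev', Equiv.apply_symm_apply,
    Category.id_comp]

variable (k : Type*) [Field k] [Preadditive C] [Linear k C] [MonoidalPreadditive C]
  [MonoidalLinear k C]

noncomputable def RStruct.homLinearEquiv (X Z : C) : (r.dual X ⟶ Z) ≃ₗ[k] (𝟙_ C ⟶ X ⊗ Z) :=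
  { (r.homEquiv X Z).symm with
    map_add' := fun f g => by simp [homEquiv_symm_apply]
    map_smul' := fun a f => by simp [homEquiv_symm_apply] }

noncomputable def RStruct.homLinearEquiv' (X Z : C) : (r.codual X ⟶ Z) ≃ₗ[k] (𝟙_ C ⟶ Z ⊗ X) :=
  { (r.homEquiv' Z X).symm with
    map_add' := fun f g => by simp [homEquiv'_symm_apply]
    map_smul' := fun a f => by simp [homEquiv'_symm_apply] }

theorem RStruct.finrank_end_dual (X : C) :
    finrank k (r.dual X ⟶ r.dual X) = finrank k (X ⟶ X) := by
  rw [(r.homLinearEquiv k X _).finrank_eq, ← (r.homLinearEquiv' k (r.dual X) X).finrank_eq,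
    r.codual_dual]

theorem RStruct.finrank_end_codual (X : C) :
    finrank k (r.codual X ⟶ r.codual X) = finrank k (X ⟶ X) := by
  rw [(r.homLinearEquiv' k X _).finrank_eq, ← (r.homLinearEquiv k (r.codual X) X).finrank_eq,
    r.dual_codual]

theorem RStruct.simple_dual [IsAlgClosed k] [Limits.HasKernels C] [SplitMonoCategory C]
    (X : C) [Simple X] [FiniteDimensional k (X ⟶ X)] : Simple (r.dual X) :=
  simple_of_finrank_end_eq_one k
    ((r.finrank_end_dual k X).trans (finrank_endomorphism_simple_eq_one k X))

theorem RStruct.simple_codual [IsAlgClosed k] [Limits.HasKernels C] [SplitMonoCategory C]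
    (X : C) [Simple X] [FiniteDimensional k (X ⟶ X)] : Simple (r.codual X) :=
  simple_of_finrank_end_eq_one k
    ((r.finrank_end_codual k X).trans (finrank_endomorphism_simple_eq_one k X))

end RStruct

theorem graded_weakly_fusion_rigid_general {k : Type*} [Field k] [IsAlgClosed k]
    {C : Type*} [Category C] [Abelian C] [Linear k C] [MonoidalCategory C]
    [MonoidalPreadditive C] [MonoidalLinear k C]
    {Γ : Type*} [Group Γ]
    (r : RStruct C)
    (hunit : Simple (𝟙_ C))
    (hfd : ∀ X Y : C, FiniteDimensional k (X ⟶ Y))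
    (hss : ∀ ⦃Z W : C⦄ (f : Z ⟶ W), Mono f → IsSplitMono f)
    (P : Γ → C → Prop)
    (hPmul : ∀ {g h : Γ} {X Y : C}, P g X → P h Y → P (g * h) (X ⊗ Y))
    (hPdual : ∀ {g : Γ} {X : C}, P g X → P g⁻¹ (r.codual X))
    (hgrade : ∀ X : C, Simple X → ∃ γ : Γ, P γ X)
    (hrigid₁ : ∀ X : C, P 1 X →
      (∃ Y : C, Nonempty (ExactPairing X Y)) ∧ (∃ Y : C, Nonempty (ExactPairing Y X))) :
    ∀ X : C, (∃ Y : C, Nonempty (ExactPairing X Y)) ∧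
      (∃ Y : C, Nonempty (ExactPairing Y X)) := by
  have : SplitMonoCategory C := ⟨fun f _ => hss f ‹_›⟩
  have isSplitMono_of_ne_zero {M : C} (c : 𝟙_ C ⟶ M) (hc : c ≠ 0) : IsSplitMono c :=
    have := mono_of_nonzero_from_simple hc
    SplitMonoCategory.isSplitMono_of_mono c
  have isRigidObject_of_simple (X : C) [Simple X] : IsRigidObject X := by
    have := hfd X X
    constructor
    · have := r.simple_dual k X
      obtain ⟨δ, hδ⟩ := hgrade (r.dual X) this
      have hX : P δ⁻¹ X := r.codual_dual X ▸ hPdual hδ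
      obtain ⟨G, ⟨_⟩⟩ := (hrigid₁ _ (mul_inv_cancel δ ▸ hPmul hδ hX)).1
      have := isSplitMono_of_ne_zero (r.coev X)
        ((r.homLinearEquiv k X _).map_ne_zero_iff.2 (id_nonzero _))
      exact exists_right_dual_of_isSplitMono_unit (G := G) (r.coev X)
    · have := r.simple_codual k X
      obtain ⟨γ, hγ⟩ := hgrade X ‹_›
      obtain ⟨G, ⟨_⟩⟩ := (hrigid₁ _ (mul_inv_cancel γ ▸ hPmul hγ (hPdual hγ))).2
      have := isSplitMono_of_ne_zero (r.coev' X)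
        ((r.homLinearEquiv' k X _).map_ne_zero_iff.2 (id_nonzero _))
      exact exists_left_dual_of_isSplitMono_unit (G := G) (r.coev' X)
  exact induction_on_simple_summands k (fun X => hfd X X) (fun _ => isRigidObject_of_isZero)
    (fun X _ => isRigidObject_of_simple X) (fun e => IsRigidObject.of_iso_biprod e)

/-- Let `Γ` be a finite group and `C = ⊕_{γ∈Γ} C_γ` a `Γ`-graded weakly fusion category
(grading predicate `P`, with `C_{γ₁} ⊗ C_{γ₂} ⊆ C_{γ₁γ₂}`, unit in `C_1`, weak duals
respecting the grading, and every simple object homogeneous) such that the identity component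
`C_1` is rigid.  Then `C` is rigid (every object has both a rigid left and right dual), hence
a fusion category. -/
theorem graded_weakly_fusion_rigid {k : Type*} [Field k] [IsAlgClosed k]
    {C : Type*} [Category C] [Abelian C] [Linear k C] [MonoidalCategory C]
    [MonoidalPreadditive C] [MonoidalLinear k C]
    {Γ : Type*} [Group Γ] [Finite Γ]
    (r : RStruct C)
    (hunit : Simple (𝟙_ C))
    (hfd : ∀ X Y : C, FiniteDimensional k (X ⟶ Y))
    (hss : ∀ ⦃Z W : C⦄ (f : Z ⟶ W), Mono f → IsSplitMono f)
    (P : Γ → C → Prop)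
    (hPunit : P 1 (𝟙_ C))
    (hPmul : ∀ {g h : Γ} {X Y : C}, P g X → P h Y → P (g * h) (X ⊗ Y))
    (hPdual : ∀ {g : Γ} {X : C}, P g X → P g⁻¹ (r.codual X))
    (hgrade : ∀ X : C, Simple X → ∃ γ : Γ, P γ X)
    (hrigid₁ : ∀ X : C, P 1 X →
      (∃ Y : C, Nonempty (ExactPairing X Y)) ∧ (∃ Y : C, Nonempty (ExactPairing Y X))) :
    ∀ X : C, (∃ Y : C, Nonempty (ExactPairing X Y)) ∧
      (∃ Y : C, Nonempty (ExactPairing Y X)) :=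
  graded_weakly_fusion_rigid_general r hunit hfd hss P hPmul hPdual hgrade hrigid₁
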